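/- arXiv:1211.4002 — 3 statements merged into one kernel-verified Lean document; each statement's English description precedes it below -/
import Mathlib

section
/- Let L, W♭, W♯, O, S, T be matrix blocks, with L, S, T ∈ Mat_d(ℂ) and suitable dimensions for the others, and let λ > 3B > 0 be constants such that m(L) ≥ λ and ‖W♭‖, ‖W♯‖, ‖O‖ ≤ B. Suppose S is invertible with m(S) ≥ μ > 0 and ‖T·S^{-1}‖ < 1. Define S̃ := L·S + W♭·T and T̃ := W♯·S + O·T. Then m(S̃) ≥ (λ - B)·μ and ‖T̃·S̃^{-1}‖ < 1 (in particular S̃ is invertible). -/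
noncomputable def mexp {𝕜 : Type*} [RCLike 𝕜] {m n : Type*} [Fintype m] [Fintype n] [DecidableEq n]
    (P : Matrix m n 𝕜) : ℝ :=
  sInf {r : ℝ | ∃ x : EuclideanSpace 𝕜 n, ‖x‖ = 1 ∧ ‖Matrix.toEuclideanLin P x‖ = r}

noncomputable def opNorm {𝕜 : Type*} [RCLike 𝕜] {m n : Type*} [Fintype m] [Fintype n] [DecidableEq n]
    (P : Matrix m n 𝕜) : ℝ :=
  sSup {r : ℝ | ∃ x : EuclideanSpace 𝕜 n, ‖x‖ = 1 ∧ ‖Matrix.toEuclideanLin P x‖ = r}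

noncomputable def sval {𝕜 : Type*} [RCLike 𝕜] {n : Type*} [Fintype n] [DecidableEq n]
    (P : Matrix n n 𝕜) : n → ℝ :=
  fun i => Real.sqrt ((Matrix.isHermitian_conjTranspose_mul_self P).eigenvalues i)

/-! Since `‖T S⁻¹‖ < 1`, we have `‖T v‖ ≤ ‖S v‖` for every `v`. Hence
`‖S̃ v‖ ≥ λ ‖S v‖ - B ‖T v‖ ≥ (λ - B) ‖S v‖ ≥ (λ - B) μ ‖v‖`, which also makes `S̃` invertible, while
`‖T̃ v‖ ≤ 2B ‖S v‖ ≤ 2B / (λ - B) ‖S̃ v‖` with `2B < λ - B`. -/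

open Matrix

section

variable {𝕜 : Type*} [RCLike 𝕜] {m n k : Type*} [Fintype m] [Fintype n] [DecidableEq n]
  [Fintype k] [DecidableEq k]

theorem norm_toEuclideanLin_le_of_opNorm_le {P : Matrix m n 𝕜} {C : ℝ} (hP : opNorm P ≤ C)
    (v : EuclideanSpace 𝕜 n) : ‖toEuclideanLin P v‖ ≤ C * ‖v‖ := by
  rcases eq_or_ne v 0 with rfl | hv
  · simp
  have hbdd : BddAbove {r : ℝ | ∃ x : EuclideanSpace 𝕜 n, ‖x‖ = 1 ∧ ‖toEuclideanLin P x‖ = r} := by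
    refine ⟨‖(toEuclideanLin P).toContinuousLinearMap‖, ?_⟩
    rintro r ⟨x, hx, rfl⟩
    simpa [hx] using (toEuclideanLin P).toContinuousLinearMap.le_opNorm x
  have hunit : ‖(‖v‖⁻¹ : 𝕜) • v‖ = 1 := by simp [norm_smul, norm_ne_zero_iff.2 hv]
  have h := (le_csSup hbdd ⟨_, hunit, rfl⟩).trans hP
  rw [map_smul, norm_smul, norm_inv, RCLike.norm_ofReal, abs_norm] at h
  rwa [inv_mul_le_iff₀ (norm_pos_iff.2 hv), mul_comm] at h

theorem mul_norm_le_norm_toEuclideanLin_of_le_mexp {P : Matrix m n 𝕜} {c : ℝ} (hP : c ≤ mexp P)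
    (v : EuclideanSpace 𝕜 n) : c * ‖v‖ ≤ ‖toEuclideanLin P v‖ := by
  rcases eq_or_ne v 0 with rfl | hv
  · simp
  have hbdd : BddBelow {r : ℝ | ∃ x : EuclideanSpace 𝕜 n, ‖x‖ = 1 ∧ ‖toEuclideanLin P x‖ = r} :=
    ⟨0, by rintro r ⟨x, -, rfl⟩; positivity⟩
  have hunit : ‖(‖v‖⁻¹ : 𝕜) • v‖ = 1 := by simp [norm_smul, norm_ne_zero_iff.2 hv]
  have h := hP.trans (csInf_le hbdd ⟨_, hunit, rfl⟩)
  rw [map_smul, norm_smul, norm_inv, RCLike.norm_ofReal, abs_norm] at h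
  rwa [le_inv_mul_iff₀ (norm_pos_iff.2 hv), mul_comm] at h

theorem le_mexp_of_forall_mul_norm_le [Nonempty n] {P : Matrix m n 𝕜} {c : ℝ}
    (h : ∀ v : EuclideanSpace 𝕜 n, c * ‖v‖ ≤ ‖toEuclideanLin P v‖) : c ≤ mexp P := by
  obtain ⟨i⟩ := ‹Nonempty n›
  refine le_csInf ⟨_, EuclideanSpace.single i 1, by simp, rfl⟩ ?_
  rintro r ⟨x, hx, rfl⟩
  simpa [hx] using h x

theorem opNorm_le_of_forall_norm_le {P : Matrix m n 𝕜} {C : ℝ} (hC : 0 ≤ C)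
    (h : ∀ v : EuclideanSpace 𝕜 n, ‖toEuclideanLin P v‖ ≤ C * ‖v‖) : opNorm P ≤ C := by
  refine Real.sSup_le ?_ hC
  rintro r ⟨x, hx, rfl⟩
  simpa [hx] using h x

theorem nonempty_of_mexp_pos {P : Matrix m n 𝕜} (hP : 0 < mexp P) : Nonempty n := by
  by_contra hn
  rw [not_nonempty_iff] at hn
  have hempty : {r : ℝ | ∃ x : EuclideanSpace 𝕜 n, ‖x‖ = 1 ∧ ‖toEuclideanLin P x‖ = r} = ∅ := by
    ext r
    simp [Subsingleton.elim _ (0 : EuclideanSpace 𝕜 n)]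
  simp [mexp, hempty] at hP

theorem isUnit_of_mexp_pos {A : Matrix n n 𝕜} (hA : 0 < mexp A) : IsUnit A := by
  refine mulVec_injective_iff_isUnit.1 fun x y hxy ↦ ?_
  have h := mul_norm_le_norm_toEuclideanLin_of_le_mexp (P := A) le_rfl (WithLp.toLp 2 (x - y))
  rw [toLpLin_toLp, toLin'_apply, mulVec_sub, hxy, sub_self, WithLp.toLp_zero, norm_zero] at h
  have : WithLp.toLp 2 (x - y) = 0 := norm_le_zero_iff.1 (nonpos_of_mul_nonpos_right h hA)
  exact sub_eq_zero.1 (congrArg WithLp.ofLp this)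

theorem opNorm_mul_inv_le_iff {T : Matrix m n 𝕜} {S : Matrix n n 𝕜} (hS : IsUnit S) {c : ℝ}
    (hc : 0 ≤ c) :
    opNorm (T * S⁻¹) ≤ c ↔ ∀ v, ‖toEuclideanLin T v‖ ≤ c * ‖toEuclideanLin S v‖ := by
  have hdet := (isUnit_iff_isUnit_det S).1 hS
  refine ⟨fun h v ↦ ?_, fun h ↦ opNorm_le_of_forall_norm_le hc fun v ↦ ?_⟩
  · have hv := norm_toEuclideanLin_le_of_opNorm_le h (toEuclideanLin S v)
    rwa [← LinearMap.comp_apply, ← toLpLin_mul_same, nonsing_inv_mul_cancel_right S T hdet] at hv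
  · have hv := h (toEuclideanLin S⁻¹ v)
    rwa [← LinearMap.comp_apply (toEuclideanLin S), ← toLpLin_mul_same, mul_nonsing_inv S hdet,
      toLpLin_one, LinearMap.id_apply, ← LinearMap.comp_apply, ← toLpLin_mul_same] at hv

theorem sub_mul_norm_le_norm_toEuclideanLin_mul_add_mul {L : Matrix m n 𝕜} {W : Matrix m k 𝕜}
    {S : Matrix n n 𝕜} {T : Matrix k n 𝕜} {lam B : ℝ} (hL : lam ≤ mexp L) (hW : opNorm W ≤ B)
    (hB : 0 ≤ B) {v : EuclideanSpace 𝕜 n} (hv : ‖toEuclideanLin T v‖ ≤ ‖toEuclideanLin S v‖) :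
    (lam - B) * ‖toEuclideanLin S v‖ ≤ ‖toEuclideanLin (L * S + W * T) v‖ := by
  have hLS := mul_norm_le_norm_toEuclideanLin_of_le_mexp hL (toEuclideanLin S v)
  have hWT := norm_toEuclideanLin_le_of_opNorm_le hW (toEuclideanLin T v)
  have hrev := norm_sub_norm_le (toEuclideanLin L (toEuclideanLin S v))
    (-toEuclideanLin W (toEuclideanLin T v))
  simp only [norm_neg, sub_neg_eq_add] at hrev
  simp only [map_add, LinearMap.add_apply, toLpLin_mul_same, LinearMap.comp_apply]
  nlinarith

theorem norm_toEuclideanLin_mul_add_mul_le {W : Matrix m n 𝕜} {O : Matrix m k 𝕜}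
    {S : Matrix n n 𝕜} {T : Matrix k n 𝕜} {B₁ B₂ : ℝ} (hW : opNorm W ≤ B₁) (hO : opNorm O ≤ B₂)
    (hB₂ : 0 ≤ B₂) {v : EuclideanSpace 𝕜 n} (hv : ‖toEuclideanLin T v‖ ≤ ‖toEuclideanLin S v‖) :
    ‖toEuclideanLin (W * S + O * T) v‖ ≤ (B₁ + B₂) * ‖toEuclideanLin S v‖ := by
  have hWS := norm_toEuclideanLin_le_of_opNorm_le hW (toEuclideanLin S v)
  have hOT := norm_toEuclideanLin_le_of_opNorm_le hO (toEuclideanLin T v)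
  simp only [map_add, LinearMap.add_apply, toLpLin_mul_same, LinearMap.comp_apply]
  refine (norm_add_le _ _).trans ?_
  nlinarith

end

theorem growth_lemma_inductive_step_general {d e : ℕ}
    (L S : Matrix (Fin d) (Fin d) ℂ) (Wb : Matrix (Fin d) (Fin e) ℂ)
    (Ws : Matrix (Fin e) (Fin d) ℂ) (O : Matrix (Fin e) (Fin e) ℂ)
    (T : Matrix (Fin e) (Fin d) ℂ)
    {lam B μ : ℝ} (hB : 0 < B) (hlam : 3 * B < lam)
    (hL : lam ≤ mexp L)
    (hWb : opNorm Wb ≤ B) (hWs : opNorm Ws ≤ B) (hO : opNorm O ≤ B)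
    (hμ : 0 < μ) (hS : μ ≤ mexp S)
    (hT : opNorm (T * S⁻¹) < 1) :
    (lam - B) * μ ≤ mexp (L * S + Wb * T) ∧
      opNorm ((Ws * S + O * T) * (L * S + Wb * T)⁻¹) < 1 ∧
      IsUnit (L * S + Wb * T) := by
  have hlamB : 0 < lam - B := by linarith
  have : Nonempty (Fin d) := nonempty_of_mexp_pos (hμ.trans_le hS)
  have hTS : ∀ v, ‖toEuclideanLin T v‖ ≤ ‖toEuclideanLin S v‖ := by
    simpa using (opNorm_mul_inv_le_iff (isUnit_of_mexp_pos (hμ.trans_le hS)) zero_le_one).1 hT.le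
  have hgrow := fun v ↦ sub_mul_norm_le_norm_toEuclideanLin_mul_add_mul hL hWb hB.le (hTS v)
  have hm : (lam - B) * μ ≤ mexp (L * S + Wb * T) :=
    le_mexp_of_forall_mul_norm_le fun v ↦ calc
      (lam - B) * μ * ‖v‖ = (lam - B) * (μ * ‖v‖) := mul_assoc _ _ _
      _ ≤ (lam - B) * ‖toEuclideanLin S v‖ :=
        mul_le_mul_of_nonneg_left (mul_norm_le_norm_toEuclideanLin_of_le_mexp hS v) hlamB.le
      _ ≤ _ := hgrow v
  have hunit : IsUnit (L * S + Wb * T) := isUnit_of_mexp_pos ((mul_pos hlamB hμ).trans_le hm)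
  refine ⟨hm, ?_, hunit⟩
  calc opNorm ((Ws * S + O * T) * (L * S + Wb * T)⁻¹) ≤ 2 * B / (lam - B) := by
        refine (opNorm_mul_inv_le_iff hunit (by positivity)).2 fun v ↦ ?_
        have hsmall := norm_toEuclideanLin_mul_add_mul_le hWs hO hB.le (hTS v)
        rw [div_mul_eq_mul_div, le_div_iff₀ hlamB]
        nlinarith [hgrow v]
    _ < 1 := by rw [div_lt_one hlamB]; linarith

/-- Inductive step of the growth lemma: if the upper-left block `L` is large
(`m(L) ≥ λ > 3B`), the other blocks are bounded by `B`, `S` is invertible with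
`m(S) ≥ μ > 0` and `‖T S⁻¹‖ < 1`, then `S̃ = L S + W♭ T`, `T̃ = W♯ S + O T`
satisfy `m(S̃) ≥ (λ - B) μ` and `‖T̃ S̃⁻¹‖ < 1`; in particular `S̃` is invertible. -/
theorem growth_lemma_inductive_step {d e : ℕ}
    (L S : Matrix (Fin d) (Fin d) ℂ) (Wb : Matrix (Fin d) (Fin e) ℂ)
    (Ws : Matrix (Fin e) (Fin d) ℂ) (O : Matrix (Fin e) (Fin e) ℂ)
    (T : Matrix (Fin e) (Fin d) ℂ)
    {lam B μ : ℝ} (hB : 0 < B) (hlam : 3 * B < lam)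
    (hL : lam ≤ mexp L)
    (hWb : opNorm Wb ≤ B) (hWs : opNorm Ws ≤ B) (hO : opNorm O ≤ B)
    (hSinv : IsUnit S) (hμ : 0 < μ) (hS : μ ≤ mexp S)
    (hT : opNorm (T * S⁻¹) < 1) :
    (lam - B) * μ ≤ mexp (L * S + Wb * T) ∧
      opNorm ((Ws * S + O * T) * (L * S + Wb * T)⁻¹) < 1 ∧
      IsUnit (L * S + Wb * T) :=
  growth_lemma_inductive_step_general L S Wb Ws O T hB hlam hL hWb hWs hO hμ hS hT
end

section
/- Let V : 𝕋 → Mat_d(ℝ) be a smooth matrix-valued function and x ∈ 𝕋 a point where the d×d matrix whose i-th row is the i-th derivative ((e∘V)^(i))(x) of e∘V := (e₁∘V, …, e_d∘V) is invertible. Then V has no constant eigenvalue: there is no E ∈ ℂ which is an eigenvalue of V(y) for every y ∈ 𝕋. -/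
/-- `e_k(A)`: the coefficient of `E^(d-k)` in `det (A - E·I)`. -/
noncomputable def eCoeff {d : ℕ} (A : Matrix (Fin d) (Fin d) ℝ) (k : ℕ) : ℝ :=
  ((A.map Polynomial.C - (Polynomial.X : Polynomial ℝ) • 1).det).coeff (d - k)

open Polynomial Matrix

lemma charmat_eq {d : ℕ} (A : Matrix (Fin d) (Fin d) ℝ) :
    A.map Polynomial.C - (Polynomial.X : Polynomial ℝ) • 1 = -(Matrix.charmatrix A) := by
  ext i j
  by_cases h : i = j <;>
    simp [charmatrix_apply, Matrix.one_apply, Matrix.diagonal_apply, h]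

lemma eCoeff_eq {d : ℕ} (A : Matrix (Fin d) (Fin d) ℝ) (k : ℕ) :
    eCoeff A k = (-1 : ℝ) ^ d * (Matrix.charpoly A).coeff (d - k) := by
  unfold eCoeff
  rw [charmat_eq, Matrix.det_neg]
  have : ((-1 : Polynomial ℝ) ^ Fintype.card (Fin d)) = Polynomial.C ((-1 : ℝ) ^ d) := by
    simp [map_pow]
  rw [this, Matrix.charpoly, coeff_C_mul]

lemma contDiff_mv_eval {σ : Type*} (f : ℝ → σ → ℝ) (hf : ∀ i, ContDiff ℝ (⊤ : ℕ∞) (f · i))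
    (p : MvPolynomial σ ℝ) : ContDiff ℝ (⊤ : ℕ∞) fun t => MvPolynomial.eval₂ (RingHom.id ℝ) (f t) p := by
  apply p.induction_on (fun a => ?_) (fun p q hp hq => ?_) (fun p i hp => ?_)
  · simpa [MvPolynomial.eval₂_C] using contDiff_const (c := a)
  · simpa [MvPolynomial.eval₂_add] using hp.add hq
  · simpa [MvPolynomial.eval₂_mul, MvPolynomial.eval₂_X] using hp.mul (hf i)

lemma contDiff_charpoly_coeff {d : ℕ} (V : ℝ → Matrix (Fin d) (Fin d) ℝ)
    (hs : ∀ i j : Fin d, ContDiff ℝ (⊤ : ℕ∞) (fun t => V t i j)) (m : ℕ) :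
    ContDiff ℝ (⊤ : ℕ∞) fun t => (Matrix.charpoly (V t)).coeff m := by
  have key : ∀ t, (Matrix.charpoly (V t)).coeff m =
      MvPolynomial.eval₂ (RingHom.id ℝ) (fun p : Fin d × Fin d => V t p.1 p.2)
        ((Matrix.charpoly.univ ℝ (Fin d)).coeff m) := by
    intro t
    have h := Matrix.charpoly.univ_coeff_eval₂Hom (R := ℝ) (Fin d) (RingHom.id ℝ)
      (fun p : Fin d × Fin d => V t p.1 p.2) m
    have h2 : Matrix.of (Function.curry fun p : Fin d × Fin d => V t p.1 p.2) = V t := by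
      ext i j; rfl
    rw [h2] at h
    rw [← h, MvPolynomial.coe_eval₂Hom]
  simp only [key]
  exact contDiff_mv_eval (fun t (q : Fin d × Fin d) => V t q.1 q.2) (fun i => hs i.1 i.2) _

lemma contDiff_eCoeff {d : ℕ} (V : ℝ → Matrix (Fin d) (Fin d) ℝ)
    (hs : ∀ i j : Fin d, ContDiff ℝ (⊤ : ℕ∞) (fun t => V t i j)) (k : ℕ) :
    ContDiff ℝ (⊤ : ℕ∞) fun t => eCoeff (V t) k := by
  simp only [eCoeff_eq]
  exact (contDiff_charpoly_coeff V hs (d - k)).const_smul ((-1 : ℝ) ^ d)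

lemma iteratedDeriv_zero_fun {n : ℕ} : iteratedDeriv n (fun _ : ℝ => (0 : ℂ)) = fun _ => 0 := by
  induction n with
  | zero => rfl
  | succ n ih => rw [iteratedDeriv_succ', deriv_const']; exact ih

lemma iteratedDeriv_const_succ {n : ℕ} (K : ℂ) (x : ℝ) :
    iteratedDeriv (n + 1) (fun _ : ℝ => K) x = 0 := by
  rw [iteratedDeriv_succ', deriv_const']
  exact congrFun iteratedDeriv_zero_fun x

lemma iteratedDeriv_ofReal_mul_const (f : ℝ → ℝ) (hf : ContDiff ℝ (⊤ : ℕ∞) f) (K : ℂ) (n : ℕ) (x : ℝ) :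
    iteratedDeriv n (fun y => (f y : ℂ) * K) x = ((iteratedDeriv n f x : ℝ) : ℂ) * K := by
  set L : ℝ →L[ℝ] ℂ := K • Complex.ofRealCLM with hL
  have hfun : (fun y => (f y : ℂ) * K) = L ∘ f := by
    funext y; simp [hL, mul_comm]
  rw [hfun, iteratedDeriv_eq_iteratedFDeriv,
    L.iteratedFDeriv_comp_left hf.contDiffAt (by exact_mod_cast le_top)]
  simp [iteratedDeriv_eq_iteratedFDeriv, hL, mul_comm]

lemma iteratedDeriv_finsum {m : ℕ} (f : Fin m → ℝ → ℂ) (hf : ∀ j, ContDiff ℝ (⊤ : ℕ∞) (f j))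
    (n : ℕ) (x : ℝ) :
    iteratedDeriv n (fun y => ∑ j, f j y) x = ∑ j, iteratedDeriv n (f j) x := by
  simp only [iteratedDeriv_eq_iteratedFDeriv]
  rw [iteratedFDeriv_sum (fun j _ => (hf j).of_le (by exact_mod_cast le_top))]
  simp

/-- If `V : 𝕋 → Mat_d(ℝ)` is a smooth (periodic) matrix-valued function and `x` is a
point where the `d × d` matrix whose `i`-th row is the `i`-th derivative of
`e ∘ V = (e₁ ∘ V, …, e_d ∘ V)` at `x` is invertible, then `V` has no constant
eigenvalue: no `E ∈ ℂ` is an eigenvalue of `V(y)` for every `y`. -/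
theorem no_constant_eigenvalue_of_nondegenerate {d : ℕ}
    (V : ℝ → Matrix (Fin d) (Fin d) ℝ) (hper : Function.Periodic V 1)
    (hsmooth : ∀ i j : Fin d, ContDiff ℝ (⊤ : ℕ∞) (fun t => V t i j)) (x : ℝ)
    (hnd : IsUnit (Matrix.of fun (i j : Fin d) =>
      iteratedDeriv (i.1 + 1) (fun t => eCoeff (V t) (j.1 + 1)) x)) :
    ¬ ∃ E : ℂ, ∀ y : ℝ, ∃ v : Fin d → ℂ, v ≠ 0 ∧
        Matrix.mulVec ((V y).map (Complex.ofReal)) v = E • v := by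
  rintro ⟨E, h⟩
  rcases Nat.eq_zero_or_pos d with hd | hd
  · subst hd
    obtain ⟨v, hv, -⟩ := h 0
    exact hv (Subsingleton.elim _ _)
  -- Step 1: det ((V y).map ofReal - E • 1) = 0 for all y
  have hdet : ∀ y : ℝ, ((V y).map (Complex.ofReal) - E • 1).det = 0 := by
    intro y
    obtain ⟨v, hv, hev⟩ := h y
    rw [← Matrix.exists_mulVec_eq_zero_iff]
    refine ⟨v, hv, ?_⟩
    rw [Matrix.sub_mulVec, hev, Matrix.smul_mulVec, Matrix.one_mulVec, sub_self]
  -- Step 2: the evaluated (mapped) charpoly of V y vanishes at E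
  have hcp : ∀ y : ℝ, Polynomial.eval E ((Matrix.charpoly (V y)).map Complex.ofRealHom) = 0 := by
    intro y
    have h1 : (Matrix.charpoly (V y)).map Complex.ofRealHom
        = Matrix.charpoly ((V y).map Complex.ofReal) := by
      rw [← Matrix.charpoly_map]
      rfl
    rw [h1, Matrix.charpoly]
    have h2 := RingHom.map_det (Polynomial.evalRingHom E)
      (Matrix.charmatrix ((V y).map Complex.ofReal))
    rw [RingHom.mapMatrix_apply] at h2
    rw [show Polynomial.eval E (Matrix.charmatrix ((V y).map Complex.ofReal)).det
        = (Polynomial.evalRingHom E) (Matrix.charmatrix ((V y).map Complex.ofReal)).det from rfl,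
      h2]
    have h3 : (Matrix.charmatrix ((V y).map Complex.ofReal)).map (Polynomial.evalRingHom E)
        = -(((V y).map Complex.ofReal) - E • 1) := by
      ext i j
      by_cases hij : i = j <;>
        simp [charmatrix_apply, Matrix.diagonal_apply, Matrix.one_apply, hij]
    rw [h3, Matrix.det_neg, hdet y, mul_zero]
  -- Step 3: rewrite as a sum over coefficients
  set p : ℝ → Polynomial ℝ := fun y => Matrix.charpoly (V y) with hp
  have hdeg : ∀ y, (p y).natDegree = d := by
    intro y; simp [hp, Matrix.charpoly_natDegree_eq_dim]
  have hsum : ∀ y : ℝ, (∑ n ∈ Finset.range (d + 1), ((p y).coeff n : ℂ) * E ^ n) = 0 := by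
    intro y
    have hlt : ((p y).map Complex.ofRealHom).natDegree < d + 1 := by
      calc ((p y).map Complex.ofRealHom).natDegree ≤ (p y).natDegree :=
            Polynomial.natDegree_map_le
        _ < d + 1 := by rw [hdeg y]; omega
    have h0 := hcp y
    rw [Polynomial.eval_eq_sum_range' hlt E] at h0
    simpa [Polynomial.coeff_map, Complex.ofRealHom_eq_coe] using h0
  -- top coefficient is 1
  have htop : ∀ y, (p y).coeff d = 1 := by
    intro y
    have := (Matrix.charpoly_monic (V y)).coeff_natDegree
    rwa [hdeg y] at this
  -- Step 4: reflected sum, define F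
  set F : ℝ → ℂ := fun y => ∑ j : Fin d, ((eCoeff (V y) (j.1 + 1) : ℝ) : ℂ) * E ^ (d - 1 - j.1)
    with hF
  have hFconst : ∀ y, F y = -((-1 : ℂ) ^ d * E ^ d) := by
    intro y
    have h1 := hsum y
    rw [Finset.sum_range_succ, htop y] at h1
    -- reflect the range-d sum
    have h2 : (∑ n ∈ Finset.range d, ((p y).coeff n : ℂ) * E ^ n)
        = ∑ n ∈ Finset.range d, ((p y).coeff (d - 1 - n) : ℂ) * E ^ (d - 1 - n) :=
      (Finset.sum_range_reflect (fun n => ((p y).coeff n : ℂ) * E ^ n) d).symm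
    have h3 : (∑ n ∈ Finset.range d, ((p y).coeff (d - 1 - n) : ℂ) * E ^ (d - 1 - n))
        = ∑ j : Fin d, ((p y).coeff (d - 1 - j.1) : ℂ) * E ^ (d - 1 - j.1) :=
      (Fin.sum_univ_eq_sum_range (fun n => ((p y).coeff (d - 1 - n) : ℂ) * E ^ (d - 1 - n)) d).symm
    have hco : ∀ j : Fin d, ((p y).coeff (d - 1 - j.1) : ℝ)
        = (-1 : ℝ) ^ d * eCoeff (V y) (j.1 + 1) := by
      intro j
      have := eCoeff_eq (V y) (j.1 + 1)
      have hsub : d - (j.1 + 1) = d - 1 - j.1 := by omega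
      rw [hsub] at this
      rw [this, ← mul_assoc, ← pow_add, ← two_mul, pow_mul]
      norm_num
      rfl
    have h4 : (∑ j : Fin d, ((p y).coeff (d - 1 - j.1) : ℂ) * E ^ (d - 1 - j.1))
        = ((-1 : ℂ) ^ d) * F y := by
      rw [hF, Finset.mul_sum]
      refine Finset.sum_congr rfl fun j _ => ?_
      rw [hco j]
      push_cast
      ring
    rw [h2, h3, h4] at h1
    -- h1 : (-1)^d * F y + 1 * E^d = 0
    have hinv : ((-1 : ℂ) ^ d) * ((-1 : ℂ) ^ d) = 1 := by
      rw [← pow_add, ← two_mul, pow_mul]; norm_num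
    have : ((-1 : ℂ) ^ d) * (((-1 : ℂ) ^ d) * F y)
        = ((-1 : ℂ) ^ d) * (-(((1 : ℝ) : ℂ) * E ^ d)) := by
      rw [eq_neg_of_add_eq_zero_left h1]
    rw [← mul_assoc, hinv, one_mul] at this
    rw [this]; push_cast [Complex.ofRealHom_eq_coe]; ring
  -- Step 5: iterated derivatives of F vanish
  have hFc : F = fun _ => -((-1 : ℂ) ^ d * E ^ d) := funext hFconst
  have hc : ∀ j : Fin d, ContDiff ℝ (⊤ : ℕ∞) (fun t => eCoeff (V t) (j.1 + 1)) :=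
    fun j => contDiff_eCoeff V hsmooth (j.1 + 1)
  have hderiv : ∀ i : Fin d, (∑ j : Fin d,
      ((iteratedDeriv (i.1 + 1) (fun t => eCoeff (V t) (j.1 + 1)) x : ℝ) : ℂ)
        * E ^ (d - 1 - j.1)) = 0 := by
    intro i
    have h1 : iteratedDeriv (i.1 + 1) F x = 0 := by
      rw [hFc]; exact iteratedDeriv_const_succ _ x
    have h2 : iteratedDeriv (i.1 + 1) F x = ∑ j : Fin d,
        ((iteratedDeriv (i.1 + 1) (fun t => eCoeff (V t) (j.1 + 1)) x : ℝ) : ℂ)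
          * E ^ (d - 1 - j.1) := by
      rw [hF]
      rw [iteratedDeriv_finsum
        (f := fun j y => ((eCoeff (V y) (j.1 + 1) : ℝ) : ℂ) * E ^ (d - 1 - j.1))
        (fun j => by
          exact ((Complex.ofRealCLM.contDiff.comp (hc j)).mul contDiff_const))
        (i.1 + 1) x]
      refine Finset.sum_congr rfl fun j _ => ?_
      exact iteratedDeriv_ofReal_mul_const _ (hc j) _ _ x
    rw [← h2, h1]
  -- Step 6: contradiction with invertibility
  set M : Matrix (Fin d) (Fin d) ℝ := Matrix.of fun (i j : Fin d) =>
    iteratedDeriv (i.1 + 1) (fun t => eCoeff (V t) (j.1 + 1)) x with hM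
  set Mc : Matrix (Fin d) (Fin d) ℂ := M.map Complex.ofReal with hMc
  have hMcUnit : IsUnit Mc := by
    have := hnd.map (Complex.ofRealHom.mapMatrix)
    exact this
  set w : Fin d → ℂ := fun j => E ^ (d - 1 - j.1) with hw
  have hMw : Mc.mulVec w = 0 := by
    funext i
    have := hderiv i
    simpa [hMc, hM, hw, Matrix.mulVec, dotProduct] using this
  have hw0 : w = 0 := by
    apply Matrix.mulVec_injective_iff_isUnit.mpr hMcUnit
    rw [hMw, Matrix.mulVec_zero]
  have hlast : w ⟨d - 1, by omega⟩ = 1 := by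
    simp [hw]
  rw [hw0] at hlast
  simp at hlast
end

section
/- Let u be a subharmonic function on a neighborhood of the annulus A_ρ = {z ∈ ℂ : 1-ρ ≤ |z| ≤ 1+ρ}, and suppose u(z) ≤ S for all z with |z| = 1+ρ and u(z) ≥ γ for all z with |z| = 1+y₀, where 0 ≤ y₀ < ρ. Then ∫_𝕋 u(e^{2πi x}) dx ≥ (γ - α·S)/(1-α), where α = log(1+y₀)/log(1+ρ). -/
/-- A function is subharmonic on a set if it is continuous there and satisfies the
sub-mean value inequality on every closed disc contained in the set. -/
def SubharmonicOn (u : ℂ → ℝ) (U : Set ℂ) : Prop :=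
  ContinuousOn u U ∧ ∀ z : ℂ, ∀ r : ℝ, 0 < r → Metric.closedBall z r ⊆ U →
    u z ≤ (2 * Real.pi)⁻¹ *
      ∫ θ in (0 : ℝ)..(2 * Real.pi), u (z + r * Complex.exp (θ * Complex.I))

/-!
Let `M(r)` be the mean of `u` over the circle `|z| = r`. By Hardy's convexity theorem `M ∘ exp`
is convex on `[0, log (1 + ρ)]`; since `log (1 + y₀) = (1 - α) · 0 + α · log (1 + ρ)`, this gives
`γ ≤ M(1 + y₀) ≤ (1 - α) M(1) + α M(1 + ρ) ≤ (1 - α) M(1) + α S`.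

Convexity comes from a maximum principle. Averaging the sub-mean value inequalities of `u` over
all rotations of a disc (and exchanging the two circle averages) shows that `z ↦ M(|z|)` again has
the sub-mean value property, while `log |z|` has the exact mean value property away from `0`.
Hence `M(|z|) - (a + b log |z|)`, for the secant `a + b log r` of `M` through the two boundary
radii, is sub-mean on the annulus and cannot exceed its boundary values, which are `≤ 0`.
-/

open Real Metric Set

namespace SubharmonicOn

variable {u : ℂ → ℝ} {U : Set ℂ}

theorem le_circleAverage (hu : SubharmonicOn u U) {z : ℂ} {r : ℝ} (hr : 0 < r)
    (hball : closedBall z r ⊆ U) : u z ≤ circleAverage u z r :=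
  hu.2 z r hr hball

theorem mono (hu : SubharmonicOn u U) {V : Set ℂ} (hVU : V ⊆ U) : SubharmonicOn u V :=
  ⟨hu.1.mono hVU, fun z r hr hball => hu.2 z r hr (hball.trans hVU)⟩

end SubharmonicOn

section CircleAverage

variable {E : Type*} [NormedAddCommGroup E] [NormedSpace ℝ E]

theorem circleMap_mul (c e : ℂ) (R θ : ℝ) :
    circleMap c R θ * e = circleMap (c * e) (R * ‖e‖) (θ + e.arg) := by
  simp only [circleMap, Complex.ofReal_add, Complex.ofReal_mul, add_mul, Complex.exp_add]
  linear_combination (-(R * Complex.exp (θ * Complex.I))) * Complex.norm_mul_exp_arg_mul_I e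

theorem circleAverage_comp_mul_right (f : ℂ → E) (c e : ℂ) (R : ℝ) :
    circleAverage (fun w => f (w * e)) c R = circleAverage f (c * e) (R * ‖e‖) := by
  rw [circleAverage_eq_integral_add (f := f) e.arg, circleAverage]
  simp only [circleMap_mul]

theorem circleAverage_zero_one_eq_integral (f : ℂ → E) :
    circleAverage f 0 1 = ∫ x in (0 : ℝ)..1, f (Complex.exp (2 * π * x * Complex.I)) := by
  have h := intervalIntegral.integral_comp_mul_left (a := 0) (b := 1)
    (fun θ => f (circleMap 0 1 θ)) (mul_ne_zero two_ne_zero pi_ne_zero)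
  simp only [mul_zero, mul_one] at h
  rw [circleAverage, ← h]
  congr 1 with x
  simp [circleMap, mul_assoc]

theorem circleAverage_log_norm {c : ℂ} {R : ℝ} (hR : |R| ≤ ‖c‖) :
    circleAverage (fun w => log ‖w‖) c R = log ‖c‖ := by
  rcases eq_or_ne R 0 with rfl | hR₀
  · exact circleAverage_zero
  have hR' : 0 < |R| := abs_pos.2 hR₀
  have h := circleAverage_log_norm_sub_const_eq_log_radius_add_posLog (a := 0) (c := c)
    hR'.ne'
  simp only [sub_zero] at h
  rw [← circleAverage_abs_radius, h, posLog_eq_log, log_mul (inv_ne_zero hR'.ne'), log_inv]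
  · ring
  · exact (hR'.trans_le hR).ne'
  · rw [abs_of_nonneg (by positivity), le_inv_mul_iff₀ hR', mul_one]
    exact hR

theorem le_circleAverage_of_le_circle {f : ℂ → ℝ} {c : ℂ} {R a : ℝ}
    (hf : CircleIntegrable f c R) (h : ∀ w ∈ sphere c |R|, a ≤ f w) :
    a ≤ circleAverage f c R :=
  (circleAverage_const a c R).symm.trans_le (circleAverage_mono (circleIntegrable_const a c R) hf h)

end CircleAverage

section Fubini

variable {c c' : ℂ} {R R' : ℝ}

theorem ContinuousOn.continuous_comp_circleMap_prod {X : Type*} [TopologicalSpace X]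
    {F : ℂ → ℂ → X}
    (hF : ContinuousOn (Function.uncurry F) (sphere c |R| ×ˢ sphere c' |R'|)) :
    Continuous fun p : ℝ × ℝ => F (circleMap c R p.1) (circleMap c' R' p.2) :=
  hF.comp_continuous (f := fun p : ℝ × ℝ => (circleMap c R p.1, circleMap c' R' p.2))
    (by fun_prop) fun p =>
    ⟨circleMap_mem_sphere' c R p.1, circleMap_mem_sphere' c' R' p.2⟩

variable {E : Type*} [NormedAddCommGroup E] [NormedSpace ℝ E]
  {F : ℂ → ℂ → E}

theorem ContinuousOn.circleIntegrable_circleAverage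
    (hF : ContinuousOn (Function.uncurry F) (sphere c |R| ×ˢ sphere c' |R'|)) :
    CircleIntegrable (fun w => circleAverage (F w) c' R') c R :=
  ((intervalIntegral.continuous_parametric_intervalIntegral_of_continuous'
    hF.continuous_comp_circleMap_prod 0 (2 * π)).const_smul _).intervalIntegrable _ _

theorem circleAverage_circleAverage_comm [CompleteSpace E]
    (hF : ContinuousOn (Function.uncurry F) (sphere c |R| ×ˢ sphere c' |R'|)) :
    circleAverage (fun w => circleAverage (F w) c' R') c R =
      circleAverage (fun w' => circleAverage (fun w => F w w') c R) c' R' := by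
  have hint : MeasureTheory.IntegrableOn
      (Function.uncurry fun θ φ => F (circleMap c R θ) (circleMap c' R' φ))
      (uIoc 0 (2 * π) ×ˢ uIoc 0 (2 * π)) :=
    (hF.continuous_comp_circleMap_prod.continuousOn.integrableOn_compact
      (isCompact_uIcc.prod isCompact_uIcc)).mono_set
      (prod_mono uIoc_subset_uIcc uIoc_subset_uIcc)
  simp only [circleAverage, intervalIntegral.integral_smul]
  rw [MeasureTheory.intervalIntegral_intervalIntegral_swap hint]

end Fubini

theorem circleAverage_lt_of_forall_le_of_exists_lt {f : ℂ → ℝ} {c : ℂ} {R a : ℝ}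
    (hf : ContinuousOn f (sphere c |R|)) (hle : ∀ w ∈ sphere c |R|, f w ≤ a)
    (hlt : ∃ w ∈ sphere c |R|, f w < a) : circleAverage f c R < a := by
  obtain ⟨w, hw, hfw⟩ := hlt
  rw [← image_circleMap_Ioc] at hw
  obtain ⟨θ, hθ, rfl⟩ := hw
  have hcont : ContinuousOn (fun θ => f (circleMap c R θ)) (Icc 0 (2 * π)) :=
    (hf.comp_continuous (continuous_circleMap c R) (circleMap_mem_sphere' c R)).continuousOn
  have h := intervalIntegral.integral_lt_integral_of_continuousOn_of_le_of_exists_lt two_pi_pos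
    hcont continuousOn_const (fun θ _ => hle _ (circleMap_mem_sphere' c R θ))
    ⟨θ, Ioc_subset_Icc_self hθ, hfw⟩
  rw [intervalIntegral.integral_const, sub_zero, smul_eq_mul] at h
  rw [circleAverage, smul_eq_mul, inv_mul_lt_iff₀ two_pi_pos]
  exact h

theorem IsCompact.forall_le_of_le_circleAverage {f : ℂ → ℝ} {K : Set ℂ} (hK : IsCompact K)
    (hf : ContinuousOn f K) (a : ℝ)
    (hsub : ∀ z ∈ K, a < f z → ∃ ε > 0, sphere z ε ⊆ K ∧ f z ≤ circleAverage f z ε) :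
    ∀ z ∈ K, f z ≤ a := by
  by_contra! ⟨z₀, hz₀, hfz₀⟩
  obtain ⟨zmax, hzmax, hmax⟩ := hK.exists_isMaxOn ⟨z₀, hz₀⟩ hf
  set Kmax := K ∩ f ⁻¹' {f zmax}
  have hKmax : IsCompact Kmax :=
    hK.of_isClosed_subset (hf.preimage_isClosed_of_isClosed hK.isClosed isClosed_singleton)
      inter_subset_left
  -- a maximiser of `f` with largest real part: `f` is strictly smaller to its right
  obtain ⟨w, ⟨hwK, hfw⟩, hwre⟩ :=
    hKmax.exists_isMaxOn ⟨zmax, hzmax, rfl⟩ Complex.continuous_re.continuousOn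
  have hfw : f w = f zmax := hfw
  obtain ⟨ε, hε, hsphere, hmean⟩ := hsub w hwK (hfw ▸ hfz₀.trans_le (hmax hz₀))
  rw [← abs_of_pos hε] at hsphere
  have hright : w + ε ∈ sphere w |ε| := by simp
  have hlt : f (w + ε) < f zmax := by
    refine (hmax (hsphere hright)).lt_of_ne fun heq => ?_
    have : (w + ε).re ≤ w.re := hwre ⟨hsphere hright, heq⟩
    simp only [Complex.add_re, Complex.ofReal_re] at this
    linarith
  have := circleAverage_lt_of_forall_le_of_exists_lt (hf.mono hsphere)
    (fun w' hw' => hmax (hsphere hw')) ⟨_, hright, hlt⟩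
  linarith

theorem SubharmonicOn.circleAverage_norm_le_circleAverage {v : ℂ → ℝ} {T : Set ℝ}
    (hv : SubharmonicOn v {w | ‖w‖ ∈ T}) {z : ℂ} {ε : ℝ} (hε : 0 < ε)
    (hball : closedBall z ε ⊆ {w | ‖w‖ ∈ T}) :
    circleAverage v 0 ‖z‖ ≤ circleAverage (fun w => circleAverage v 0 ‖w‖) z ε := by
  have hrot : ∀ e : ℂ, ‖e‖ = 1 → ∀ w ∈ closedBall z ε, ‖w * e‖ ∈ T := by
    intro e he w hw
    rw [norm_mul, he, mul_one]
    exact hball hw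
  have hball_rot : ∀ e : ℂ, ‖e‖ = 1 → closedBall (z * e) ε ⊆ {w | ‖w‖ ∈ T} := by
    intro e he w hw
    have he₀ : e ≠ 0 := norm_ne_zero_iff.1 (he ▸ one_ne_zero)
    have hwe : w / e ∈ closedBall z ε := by
      rw [mem_closedBall, dist_eq_norm, show w / e - z = (w - z * e) / e by field_simp,
        norm_div, he, div_one, ← dist_eq_norm]
      exact hw
    simpa [div_mul_cancel₀ w he₀] using hrot e he _ hwe
  have hF : ContinuousOn (Function.uncurry fun e w => v (w * e))
      (sphere 0 |1| ×ˢ sphere z |ε|) :=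
    hv.1.comp (continuous_snd.mul continuous_fst).continuousOn fun p hp =>
      hrot p.1 (by simpa using hp.1) p.2
        (sphere_subset_closedBall (by simpa [abs_of_pos hε] using hp.2))
  have hint : CircleIntegrable (fun e => v (e * z)) 0 1 := by
    refine ContinuousOn.circleIntegrable'
      (hv.1.comp (continuous_id.mul continuous_const).continuousOn fun e he => ?_)
    simpa [mul_comm e] using hrot e (by simpa using he) z (mem_closedBall_self hε.le)
  calc circleAverage v 0 ‖z‖ = circleAverage (fun e => v (e * z)) 0 1 := by
        rw [circleAverage_comp_mul_right, zero_mul, one_mul]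
    _ ≤ circleAverage (fun e => circleAverage (fun w => v (w * e)) z ε) 0 1 := by
        refine circleAverage_mono hint hF.circleIntegrable_circleAverage fun e he => ?_
        have he : ‖e‖ = 1 := by simpa using he
        rw [circleAverage_comp_mul_right, he, mul_one, mul_comm]
        exact hv.le_circleAverage hε (hball_rot e he)
    _ = circleAverage (fun w => circleAverage (fun e => v (w * e)) 0 1) z ε :=
        circleAverage_circleAverage_comm hF
    _ = circleAverage (fun w => circleAverage v 0 ‖w‖) z ε := by
        congr 1 with w
        simp_rw [mul_comm w]
        rw [circleAverage_comp_mul_right, zero_mul, one_mul]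

theorem SubharmonicOn.circleAverage_norm_sub_log_le_circleAverage {v : ℂ → ℝ} {T : Set ℝ}
    (hv : SubharmonicOn v {w | ‖w‖ ∈ T}) (hT : ∀ r ∈ T, 0 < r) {z : ℂ} {ε : ℝ} (hε : 0 < ε)
    (hball : closedBall z ε ⊆ {w | ‖w‖ ∈ T}) (a b : ℝ) :
    circleAverage v 0 ‖z‖ - (a + b * log ‖z‖) ≤
      circleAverage (fun w => circleAverage v 0 ‖w‖ - (a + b * log ‖w‖)) z ε := by
  have hsphere : ∀ w ∈ sphere z |ε|, ‖w‖ ∈ T := fun w hw =>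
    hball (sphere_subset_closedBall (by rwa [abs_of_pos hε] at hw))
  have hεz : |ε| ≤ ‖z‖ := by
    by_contra! h
    rw [abs_of_pos hε] at h
    have h0 : (0 : ℂ) ∈ closedBall z ε := by
      rw [mem_closedBall, dist_zero_left]
      exact h.le
    simpa using hT _ (hball h0)
  have hM : ContinuousOn (fun w => circleAverage v 0 ‖w‖) (sphere z |ε|) :=
    (ContinuousOn.circleAverage (c := 0) (by simpa only [sub_zero] using hv.1)
      fun r hr => (hT r hr).le).comp
      continuous_norm.continuousOn hsphere
  have hlog : ContinuousOn (fun w => log ‖w‖) (sphere z |ε|) :=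
    continuousOn_log.comp continuous_norm.continuousOn fun w hw =>
      (hT _ (hsphere w hw)).ne'
  have hblog : ContinuousOn (fun w => b * log ‖w‖) (sphere z |ε|) :=
    continuousOn_const.mul hlog
  have hmean : circleAverage (fun w => a + b * log ‖w‖) z ε = a + b * log ‖z‖ := by
    rw [circleAverage_fun_add (circleIntegrable_const a z ε) hblog.circleIntegrable',
      circleAverage_const]
    simp only [← smul_eq_mul, circleAverage_fun_smul, circleAverage_log_norm hεz]
  have haff : ContinuousOn (fun w => a + b * log ‖w‖) (sphere z |ε|) :=
    continuousOn_const.add hblog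
  rw [circleAverage_fun_sub hM.circleIntegrable' haff.circleIntegrable', hmean]
  gcongr
  exact hv.circleAverage_norm_le_circleAverage hε hball

theorem SubharmonicOn.circleAverage_le_of_le_affine_log {v : ℂ → ℝ} {r₁ r₂ : ℝ}
    (hr₁ : 0 < r₁) (hv : SubharmonicOn v {w | ‖w‖ ∈ Icc r₁ r₂}) {a b : ℝ}
    (h₁ : circleAverage v 0 r₁ ≤ a + b * log r₁) (h₂ : circleAverage v 0 r₂ ≤ a + b * log r₂)
    {r : ℝ} (hr : r ∈ Icc r₁ r₂) : circleAverage v 0 r ≤ a + b * log r := by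
  have hT : ∀ s ∈ Icc r₁ r₂, 0 < s := fun s hs => hr₁.trans_le hs.1
  have hK : IsCompact {w : ℂ | ‖w‖ ∈ Icc r₁ r₂} :=
    (isCompact_closedBall (0 : ℂ) r₂).of_isClosed_subset
      (isClosed_Icc.preimage continuous_norm) fun w hw => mem_closedBall_zero_iff.2 hw.2
  have hf : ContinuousOn (fun w => circleAverage v 0 ‖w‖ - (a + b * log ‖w‖))
      {w : ℂ | ‖w‖ ∈ Icc r₁ r₂} :=
    ((ContinuousOn.circleAverage (c := 0) (by simpa only [sub_zero] using hv.1)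
      fun s hs => (hT s hs).le).comp continuous_norm.continuousOn fun w hw => hw).sub
      (continuousOn_const.add (continuousOn_const.mul
        (continuousOn_log.comp continuous_norm.continuousOn fun w hw => (hT _ hw).ne')))
  have hrr : ‖(r : ℂ)‖ = r := by simp [abs_of_pos (hT r hr)]
  have key := hK.forall_le_of_le_circleAverage hf 0 ?_ (r : ℂ) (show ‖(r : ℂ)‖ ∈ _ from hrr ▸ hr)
  · rw [hrr] at key
    linarith
  intro z hz hfz
  have hz₁ : r₁ < ‖z‖ := hz.1.lt_of_ne fun h => by
    rw [← h] at hfz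
    linarith
  have hz₂ : ‖z‖ < r₂ := hz.2.lt_of_ne fun h => by
    rw [h] at hfz
    linarith
  set ε := min (‖z‖ - r₁) (r₂ - ‖z‖)
  have hε : 0 < ε := lt_min (sub_pos.2 hz₁) (sub_pos.2 hz₂)
  have hball : closedBall z ε ⊆ {w : ℂ | ‖w‖ ∈ Icc r₁ r₂} := by
    intro w hw
    rw [mem_closedBall, dist_eq_norm] at hw
    have := abs_norm_sub_norm_le w z
    rw [abs_le] at this
    constructor <;> linarith [min_le_left (‖z‖ - r₁) (r₂ - ‖z‖),
      min_le_right (‖z‖ - r₁) (r₂ - ‖z‖)]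
  exact ⟨ε, hε, sphere_subset_closedBall.trans hball,
    hv.circleAverage_norm_sub_log_le_circleAverage hT hε hball a b⟩

theorem SubharmonicOn.convexOn_circleAverage_exp {v : ℂ → ℝ} {s₁ s₂ : ℝ}
    (hv : SubharmonicOn v {w | ‖w‖ ∈ Icc (exp s₁) (exp s₂)}) :
    ConvexOn ℝ (Icc s₁ s₂) fun t => circleAverage v 0 (exp t) := by
  refine LinearOrder.convexOn_of_lt (convex_Icc _ _) fun x hx y hy hxy α β hα hβ hαβ => ?_
  set g := fun t => circleAverage v 0 (exp t)
  set b := (g y - g x) / (y - x)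
  have hb : b * (y - x) = g y - g x := div_mul_cancel₀ _ (sub_ne_zero.2 hxy.ne')
  have hsub : {w : ℂ | ‖w‖ ∈ Icc (exp x) (exp y)} ⊆ {w | ‖w‖ ∈ Icc (exp s₁) (exp s₂)} :=
    fun w hw => ⟨(exp_le_exp.2 hx.1).trans hw.1, hw.2.trans (exp_le_exp.2 hy.2)⟩
  have hmid : exp (α • x + β • y) ∈ Icc (exp x) (exp y) := by
    simp only [smul_eq_mul, exp_le_exp, mem_Icc]
    have hβ' := mul_pos hβ (sub_pos.2 hxy)
    have hα' := mul_pos hα (sub_pos.2 hxy)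
    constructor
    · linear_combination -x * hαβ + hβ'.le
    · linear_combination y * hαβ + hα'.le
  have h := (hv.mono hsub).circleAverage_le_of_le_affine_log (exp_pos x) (a := g x - b * x) (b := b)
    (by rw [log_exp]; linarith) (by rw [log_exp]; linarith) hmid
  rw [log_exp] at h
  calc g (α • x + β • y) ≤ g x - b * x + b * (α • x + β • y) := h
    _ = α • g x + β • g y := by
        simp only [smul_eq_mul]
        linear_combination β * hb - (g x - b * x) * hαβ

theorem subharmonic_mean_estimate_general {ρ y₀ S γ : ℝ} (hρ : 0 < ρ)
    (hy₀ : 0 ≤ y₀) (hy₀ρ : y₀ < ρ)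
    (u : ℂ → ℝ) (U : Set ℂ)
    (hU : {z : ℂ | 1 - ρ ≤ ‖z‖ ∧ ‖z‖ ≤ 1 + ρ} ⊆ U)
    (hsub : SubharmonicOn u U)
    (hS : ∀ z : ℂ, ‖z‖ = 1 + ρ → u z ≤ S)
    (hγ : ∀ z : ℂ, ‖z‖ = 1 + y₀ → γ ≤ u z) :
    (γ - (Real.log (1 + y₀) / Real.log (1 + ρ)) * S) /
        (1 - Real.log (1 + y₀) / Real.log (1 + ρ)) ≤
      ∫ x in (0 : ℝ)..1, u (Complex.exp (2 * Real.pi * x * Complex.I)) := by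
  have hT : 0 < log (1 + ρ) := log_pos (by linarith)
  set α := log (1 + y₀) / log (1 + ρ)
  have hα₀ : 0 ≤ α := div_nonneg (log_nonneg (by linarith)) hT.le
  have hα₁ : α < 1 := (div_lt_one hT).2 (log_lt_log (by linarith) (by linarith))
  have hsphere : ∀ r ∈ Icc 1 (1 + ρ), ∀ z ∈ sphere (0 : ℂ) |r|, ‖z‖ = r ∧ z ∈ U := by
    intro r hr z hz
    rw [mem_sphere_zero_iff_norm, abs_of_pos (by linarith [hr.1])] at hz
    exact ⟨hz, hU ⟨by linarith [hr.1], by linarith [hr.2]⟩⟩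
  have hint : ∀ r ∈ Icc 1 (1 + ρ), CircleIntegrable u 0 r := fun r hr =>
    (hsub.1.mono fun z hz => (hsphere r hr z hz).2).circleIntegrable'
  have hlower : γ ≤ circleAverage u 0 (1 + y₀) := by
    have hr : 1 + y₀ ∈ Icc 1 (1 + ρ) := ⟨by linarith, by linarith⟩
    exact le_circleAverage_of_le_circle (hint _ hr) fun z hz => hγ z (hsphere _ hr z hz).1
  have hupper : circleAverage u 0 (1 + ρ) ≤ S := by
    have hr : 1 + ρ ∈ Icc 1 (1 + ρ) := ⟨by linarith, le_rfl⟩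
    exact circleAverage_mono_on_of_le_circle (hint _ hr) fun z hz => hS z (hsphere _ hr z hz).1
  have hann : {w : ℂ | ‖w‖ ∈ Icc (exp 0) (exp (log (1 + ρ)))} ⊆ U := by
    rw [exp_zero, exp_log (by linarith)]
    exact fun w hw => hU ⟨by linarith [hw.1], hw.2⟩
  have hconv := (hsub.mono hann).convexOn_circleAverage_exp.2 (left_mem_Icc.2 hT.le)
    (right_mem_Icc.2 hT.le) (sub_nonneg.2 hα₁.le) hα₀ (sub_add_cancel 1 α)
  have hmid : (1 - α) * 0 + α * log (1 + ρ) = log (1 + y₀) := by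
    rw [mul_zero, zero_add, div_mul_cancel₀ _ hT.ne']
  simp only [smul_eq_mul] at hconv
  rw [hmid, exp_log (by linarith), exp_zero, exp_log (by linarith)] at hconv
  rw [← circleAverage_zero_one_eq_integral, div_le_iff₀ (sub_pos.2 hα₁)]
  linarith [mul_le_mul_of_nonneg_left hupper hα₀]

/-- Subharmonic estimate: if `u` is subharmonic on a neighborhood of the annulus
`A_ρ = {1-ρ ≤ |z| ≤ 1+ρ}`, `u ≤ S` on the circle `|z| = 1+ρ` and `u ≥ γ` on the
circle `|z| = 1+y₀` with `0 ≤ y₀ < ρ`, then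
`∫_𝕋 u ≥ (γ - α S)/(1-α)` where `α = log(1+y₀)/log(1+ρ)`. -/
theorem subharmonic_mean_estimate {ρ y₀ S γ : ℝ} (hρ : 0 < ρ)
    (hy₀ : 0 ≤ y₀) (hy₀ρ : y₀ < ρ)
    (u : ℂ → ℝ) (U : Set ℂ) (hUopen : IsOpen U)
    (hU : {z : ℂ | 1 - ρ ≤ ‖z‖ ∧ ‖z‖ ≤ 1 + ρ} ⊆ U)
    (hsub : SubharmonicOn u U)
    (hS : ∀ z : ℂ, ‖z‖ = 1 + ρ → u z ≤ S)
    (hγ : ∀ z : ℂ, ‖z‖ = 1 + y₀ → γ ≤ u z) :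
    (γ - (Real.log (1 + y₀) / Real.log (1 + ρ)) * S) /
        (1 - Real.log (1 + y₀) / Real.log (1 + ρ)) ≤
      ∫ x in (0 : ℝ)..1, u (Complex.exp (2 * Real.pi * x * Complex.I)) :=
  subharmonic_mean_estimate_general hρ hy₀ hy₀ρ u U hU hsub hS hγ
end
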